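/- arXiv:2504.01713 — 2 statements merged into one kernel-verified Lean document; each statement's English description precedes it below -/
import Mathlib

section
/- Let S be a set of d+1 distinct points in ℝ^d that are pairwise equidistant (the vertices of a regular d-dimensional simplex). Then for every a ∈ ℝ^d there exists b ∈ ℝ^d with b ≠ a such that V_B(a,b) ≥ d. In particular, Alice can never claim more than a proportion 1/(d+1) of the voters against a best response of Bob. -/
open scoped RealInnerProductSpace

/-!
The vertices of a regular simplex are affinely independent, so the convex hulls of its facets
have empty intersection and `a` misses the hull `K` of some facet. Bob answers with the point
`b ∈ K` nearest to `a`: the angle at `b` between `a` and any `x ∈ K` is obtuse, so every vertex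
of that facet is strictly closer to `b` than to `a`, and Bob wins `d` of the `d + 1` voters.
-/

/-- `claims S a b` is the number of voters in `S` strictly closer to `a` than to `b`.
Thus `V_A(a,b) = claims S a b` and `V_B(a,b) = claims S b a`. -/
noncomputable def claims {d : ℕ} (S : Finset (EuclideanSpace ℝ (Fin d)))
    (a b : EuclideanSpace ℝ (Fin d)) : ℕ :=
  (S.filter fun x => dist a x < dist b x).card

/-- `a` is a winning point for Alice: `V_A(a,b) ≥ V_B(a,b)` for every `b`. -/
def IsWinningPoint {d : ℕ} (S : Finset (EuclideanSpace ℝ (Fin d)))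
    (a : EuclideanSpace ℝ (Fin d)) : Prop :=
  ∀ b : EuclideanSpace ℝ (Fin d), claims S b a ≤ claims S a b

section

variable {V P : Type*} [NormedAddCommGroup V] [InnerProductSpace ℝ V] [MetricSpace P]
  [NormedAddTorsor V P]

/-- For weights of total mass zero, `‖∑ wᵢ pᵢ‖² = -½ ∑ᵢⱼ wᵢ wⱼ ‖pᵢ - pⱼ‖²`; with all
distances equal to `r` this is `r²/2 · ∑ wᵢ²`. -/
theorem affineIndependent_of_dist_eq {ι : Type*} (p : ι → P) {r : ℝ} (hr : r ≠ 0)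
    (h : ∀ i j, i ≠ j → dist (p i) (p j) = r) : AffineIndependent ℝ p := by
  classical
  intro s w hw hv
  have hdist : ∀ i j,
      dist (p i) (p j) * dist (p i) (p j) = r ^ 2 - if i = j then r ^ 2 else 0 := by
    intro i j
    by_cases hij : i = j
    · simp [hij]
    · simp [hij, h i j hij, sq]
  have hsq : (∑ i ∈ s, w i * w i) * r ^ 2 = 0 := by
    have := EuclideanGeometry.inner_weightedVSub p hw p hw
    simp only [hv, inner_zero_left, hdist, mul_sub, mul_ite, mul_zero, Finset.sum_sub_distrib,
      Finset.sum_ite_eq, ← Finset.sum_mul, ← Finset.mul_sum, hw, Finset.sum_const_zero,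
      zero_mul, Finset.sum_ite_mem, Finset.inter_self] at this
    linarith
  have hsum := (mul_eq_zero.1 hsq).resolve_right (pow_ne_zero 2 hr)
  intro i hi
  exact mul_self_eq_zero.1 <|
    (Finset.sum_eq_zero_iff_of_nonneg fun j _ => mul_self_nonneg (w j)).1 hsum i hi

end

theorem AffineIndependent.exists_notMem_convexHull_erase {𝕜 E : Type*} [Field 𝕜]
    [LinearOrder 𝕜] [IsStrictOrderedRing 𝕜] [AddCommGroup E] [Module 𝕜 E] [DecidableEq E]
    {S : Finset E} (hS : AffineIndependent 𝕜 ((↑) : S → E)) (hne : S.Nonempty) (a : E) :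
    ∃ x ∈ S, a ∉ convexHull 𝕜 (↑(S.erase x) : Set E) := by
  by_contra! hall
  have hdiff : ∀ t : Finset E, a ∈ convexHull 𝕜 (↑(S \ t) : Set E) := by
    intro t
    induction t using Finset.induction_on with
    | empty =>
      obtain ⟨x, hx⟩ := hne
      simpa using convexHull_mono (Finset.coe_subset.2 (S.erase_subset x)) (hall x hx)
    | insert x t _ ih =>
      by_cases hx : x ∈ S
      · have hfacet : S \ insert x t = (S \ t) ∩ S.erase x := by
          ext y; simp only [Finset.mem_sdiff, Finset.mem_insert, Finset.mem_inter,
            Finset.mem_erase]; tauto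
        rw [hfacet, Finset.coe_inter,
          hS.convexHull_inter (t₁ := S \ t) Finset.sdiff_subset (S.erase_subset x)]
        exact ⟨ih, hall x hx⟩
      · rwa [Finset.sdiff_insert_of_notMem hx]
  simpa using hdiff S

theorem exists_dist_lt_of_notMem_convex {F : Type*} [NormedAddCommGroup F]
    [InnerProductSpace ℝ F] {K : Set F} (hne : K.Nonempty) (hc : IsComplete K)
    (hK : Convex ℝ K) {a : F} (ha : a ∉ K) :
    ∃ b ∈ K, ∀ x ∈ K, dist b x < dist a x := by
  obtain ⟨b, hbK, hb⟩ := exists_norm_eq_iInf_of_complete_convex hne hc hK a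
  have hobtuse := (norm_eq_iInf_iff_real_inner_le_zero hK hbK).1 hb
  have hab : 0 < ‖a - b‖ := norm_pos_iff.2 (sub_ne_zero.2 fun h => ha (h ▸ hbK))
  refine ⟨b, hbK, fun x hx => ?_⟩
  have hsq : ‖a - x‖ ^ 2 = ‖a - b‖ ^ 2 - 2 * ⟪a - b, x - b⟫ + ‖x - b‖ ^ 2 := by
    rw [← norm_sub_sq_real]; congr 2; abel
  rw [dist_eq_norm, dist_eq_norm, ← norm_neg (b - x), neg_sub]
  nlinarith [hobtuse x hx, norm_nonneg (a - x), norm_nonneg (x - b)]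

section Claims

variable {d : ℕ} {S F : Finset (EuclideanSpace ℝ (Fin d))} {a b : EuclideanSpace ℝ (Fin d)}

theorem card_le_claims (hF : F ⊆ S) (hcloser : ∀ x ∈ F, dist b x < dist a x) :
    F.card ≤ claims S b a :=
  Finset.card_le_card fun x hx => Finset.mem_filter.2 ⟨hF hx, hcloser x hx⟩

theorem claims_le_one {x₀ : EuclideanSpace ℝ (Fin d)}
    (hcloser : ∀ x ∈ S.erase x₀, dist b x < dist a x) : claims S a b ≤ 1 := by
  refine Finset.card_le_one.2 fun x hx y hy => ?_
  have hmem : ∀ z ∈ S.filter fun x => dist a x < dist b x, z = x₀ := by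
    intro z hz
    obtain ⟨hzS, hz⟩ := Finset.mem_filter.1 hz
    by_contra hne
    exact (hcloser z (Finset.mem_erase.2 ⟨hne, hzS⟩)).asymm hz
  rw [hmem x hx, hmem y hy]

end Claims

/-- if `S` consists of `d + 1` pairwise equidistant points in `ℝ^d` (the vertices
of a regular simplex), then for every `a` Bob has a reply `b ≠ a` with `V_B(a,b) ≥ d`; in
particular Alice claims at most `|S|/(d+1)` of the voters, i.e. `(d+1)·V_A(a,b) ≤ |S|`. -/
theorem stmt18 (d : ℕ) (hd : 1 ≤ d) (S : Finset (EuclideanSpace ℝ (Fin d)))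
    (hcard : S.card = d + 1)
    (hequi : ∃ r : ℝ, 0 < r ∧ ∀ x ∈ S, ∀ y ∈ S, x ≠ y → dist x y = r) :
    ∀ a : EuclideanSpace ℝ (Fin d), ∃ b : EuclideanSpace ℝ (Fin d),
      b ≠ a ∧ d ≤ claims S b a ∧ (d + 1) * claims S a b ≤ S.card := by
  classical
  intro a
  obtain ⟨r, hr, hdist⟩ := hequi
  have hS : AffineIndependent ℝ ((↑) : S → EuclideanSpace ℝ (Fin d)) :=
    affineIndependent_of_dist_eq _ hr.ne' fun x y hxy =>
      hdist x x.2 y y.2 (Subtype.coe_ne_coe.2 hxy)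
  obtain ⟨x₀, hx₀, ha⟩ := hS.exists_notMem_convexHull_erase (Finset.card_pos.1 (by omega)) a
  have hF : (S.erase x₀).card = d := by rw [Finset.card_erase_of_mem hx₀, hcard]; rfl
  have hFne : (S.erase x₀).Nonempty := Finset.card_pos.1 (by omega)
  obtain ⟨b, hb, hK⟩ := exists_dist_lt_of_notMem_convex
    ((Finset.coe_nonempty.2 hFne).convexHull (𝕜 := ℝ))
    ((S.erase x₀).finite_toSet.isCompact_convexHull (𝕜 := ℝ)).isComplete
    (convex_convexHull ℝ _) ha
  have hcloser : ∀ x ∈ S.erase x₀, dist b x < dist a x := fun x hx =>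
    hK x (subset_convexHull ℝ _ hx)
  refine ⟨b, fun hba => ha (hba ▸ hb), ?_, ?_⟩
  · exact hF.symm.le.trans (card_le_claims (S.erase_subset x₀) hcloser)
  · simpa [hcard] using Nat.mul_le_mul_left (d + 1) (claims_le_one hcloser)
end

section
/- For every finite set S of points in ℝ^d there exists a point a ∈ ℝ^d such that for every b ∈ ℝ^d with b ≠ a, Alice claims at least a proportion 1/(d+1) of the voters: (d+1)·|{x ∈ S : ‖a−x‖ < ‖b−x‖}| ≥ |S|. -/
open scoped RealInnerProductSpace

/-! The winning point is a centerpoint of `S`. By Helly's theorem the convex hulls of all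
`T ⊆ S` with `d |S| < (d + 1) |T|` have a common point `a`: any `d + 1` such `T` share a voter,
because their complements have fewer than `|S|` elements altogether. If some `b ≠ a` claimed
too few voters, the voters weakly closer to `b` would form such a `T`; but its convex hull lies
in the closed half-space `{x | dist b x ≤ dist a x}`, which does not contain `a`. -/

open Finset Module

theorem Finset.exists_mem_forall_mem_of_mul_card_lt {α : Type*} [DecidableEq α] {S : Finset α}
    (hS : S.Nonempty) {k : ℕ} {I : Finset (Finset α)} (hI : #I ≤ k + 1)
    (hdeep : ∀ T ∈ I, T ⊆ S ∧ k * #S < (k + 1) * #T) :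
    ∃ x ∈ S, ∀ T ∈ I, x ∈ T := by
  have hcompl : ∀ T ∈ I, (k + 1) * #(S \ T) ≤ #S - 1 := by
    intro T hT
    obtain ⟨hTS, hlt⟩ := hdeep T hT
    have := Nat.mul_le_mul_left k (card_le_card hTS)
    rw [card_sdiff_of_subset hTS, Nat.mul_sub]
    simp only [add_one_mul] at hlt ⊢
    omega
  have hsum : (k + 1) * ∑ T ∈ I, #(S \ T) < (k + 1) * #S := calc
    (k + 1) * ∑ T ∈ I, #(S \ T) ≤ ∑ _T ∈ I, (#S - 1) := by
      rw [mul_sum]; exact sum_le_sum hcompl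
    _ = #I * (#S - 1) := by rw [sum_const, smul_eq_mul]
    _ ≤ (k + 1) * (#S - 1) := Nat.mul_le_mul_right _ hI
    _ < (k + 1) * #S := by have := hS.card_pos; gcongr; omega
  have hunion : #(I.biUnion (S \ ·)) < #S :=
    card_biUnion_le.trans_lt (Nat.lt_of_mul_lt_mul_left hsum)
  obtain ⟨x, hxS, hx⟩ := exists_mem_notMem_of_card_lt_card hunion
  refine ⟨x, hxS, fun T hT => ?_⟩
  by_contra hxT
  exact hx (mem_biUnion.2 ⟨T, hT, mem_sdiff.2 ⟨hxS, hxT⟩⟩)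

section Centerpoint

variable {E : Type*} [NormedAddCommGroup E] [InnerProductSpace ℝ E]

theorem convex_setOf_dist_le_dist (a b : E) : Convex ℝ {x : E | dist b x ≤ dist a x} := by
  have hhalf : {x : E | dist b x ≤ dist a x} =
      {x | innerₛₗ ℝ (a - b) x ≤ (‖a‖ ^ 2 - ‖b‖ ^ 2) / 2} := by
    ext x
    rw [Set.mem_ofPred_eq, Set.mem_ofPred_eq, dist_eq_norm, dist_eq_norm,
      ← sq_le_sq₀ (norm_nonneg _) (norm_nonneg _), norm_sub_sq_real, norm_sub_sq_real,
      innerₛₗ_apply_apply, inner_sub_left]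
    constructor <;> intro h <;> linarith
  exact hhalf ▸ convex_halfSpace_le (innerₛₗ ℝ (a - b)).isLinear _

variable [FiniteDimensional ℝ E]

theorem exists_centerpoint (S : Finset E) :
    ∃ c : E, ∀ T ⊆ S, finrank ℝ E * #S < (finrank ℝ E + 1) * #T →
      c ∈ convexHull ℝ (T : Set E) := by
  classical
  rcases S.eq_empty_or_nonempty with rfl | hS
  · exact ⟨0, fun T hT hlt => by simp [subset_empty.1 hT] at hlt⟩
  let deep := S.powerset.filter fun T => finrank ℝ E * #S < (finrank ℝ E + 1) * #T
  have hdeep : ∀ T ∈ deep, T ⊆ S ∧ finrank ℝ E * #S < (finrank ℝ E + 1) * #T := by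
    simp [deep]
  obtain ⟨c, hc⟩ : (⋂ T ∈ deep, convexHull ℝ (T : Set E)).Nonempty := by
    refine Convex.helly_theorem' (fun T _ => convex_convexHull ℝ _) fun I hI hIcard => ?_
    obtain ⟨x, -, hx⟩ := exists_mem_forall_mem_of_mul_card_lt hS hIcard fun T hT => hdeep T (hI hT)
    exact ⟨x, Set.mem_iInter₂.2 fun T hT => subset_convexHull ℝ _ (hx T hT)⟩
  exact ⟨c, fun T hTS hlt => Set.mem_iInter₂.1 hc T (by simp [deep, hTS, hlt])⟩

theorem exists_forall_card_le_mul_card_closer (S : Finset E) :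
    ∃ a : E, ∀ b ≠ a, #S ≤ (finrank ℝ E + 1) * #{x ∈ S | dist a x < dist b x} := by
  classical
  obtain ⟨a, ha⟩ := exists_centerpoint S
  refine ⟨a, fun b hb => ?_⟩
  by_contra! hlt
  let M := {x ∈ S | dist b x ≤ dist a x}
  have hcard : #{x ∈ S | dist a x < dist b x} + #M = #S := by
    simpa only [M, not_lt] using
      card_filter_add_card_filter_not (s := S) fun x => dist a x < dist b x
  have haM : a ∈ convexHull ℝ (M : Set E) := ha M (filter_subset _ _) (by nlinarith)
  have hba : dist b a ≤ dist a a :=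
    convexHull_min (fun x hx => (mem_filter.1 hx).2) (convex_setOf_dist_le_dist a b) haM
  exact hb (dist_le_zero.1 (hba.trans_eq (dist_self a)))

end Centerpoint

theorem stmt19_general (d : ℕ) (S : Finset (EuclideanSpace ℝ (Fin d))) :
    ∃ a : EuclideanSpace ℝ (Fin d), ∀ b : EuclideanSpace ℝ (Fin d), b ≠ a →
      S.card ≤ (d + 1) * claims S a b := by
  simpa only [claims, finrank_euclideanSpace_fin] using exists_forall_card_le_mul_card_closer S

/-- for every finite set `S` of voters in `ℝ^d` there is a point `a` such that,
against any `b ≠ a`, Alice claims at least a proportion `1/(d+1)` of the voters: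
`(d+1)·V_A(a,b) ≥ |S|`. -/
theorem stmt19 (d : ℕ) (hd : 1 ≤ d) (S : Finset (EuclideanSpace ℝ (Fin d))) :
    ∃ a : EuclideanSpace ℝ (Fin d), ∀ b : EuclideanSpace ℝ (Fin d), b ≠ a →
      S.card ≤ (d + 1) * claims S a b :=
  stmt19_general d S
end
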